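/- arXiv:hep-th/9907042 — 3 statements merged into one kernel-verified Lean document; each statement's English description precedes it below -/
import Mathlib

section
/- Let k be a natural number and let Λ₁, Λ₂ be real linear combinations of τ₁, τ₂, τ₃ satisfying the equations k·⁅τ₃, Λ₁⁆ = Λ₂ and k·⁅τ₃, Λ₂⁆ = -Λ₁. If Λ₁ ≠ 0 or Λ₂ ≠ 0, then k = 1. (The Higgs field constraint for spherically symmetric SU(2) connections classified by λ_k has a nontrivial solution only for k = 1.) -/
/-!
Since `τ₃ = diag(-i/2, i/2)`, the map `ad = ⁅τ₃, ·⁆` multiplies the off-diagonal entries of a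
matrix by `∓i` and kills the diagonal, so `ad³ = -ad` on all of `M₂(ℂ)`. The two equations give
`k² ad² Λ₁ = -Λ₁`; applying `ad²` and using `ad⁴ = -ad²` yields `(k² - 1) ad² Λ₁ = 0`. If `k² ≠ 1`
then `ad² Λ₁ = 0`, hence `Λ₁ = 0` and `Λ₂ = k ad Λ₁ = 0`.
-/

/-- `τ₁ = -(i/2)σ₁` where `σ₁ = [[0,1],[1,0]]` is the first Pauli matrix. -/
noncomputable def tau1 : Matrix (Fin 2) (Fin 2) ℂ :=
  (-(Complex.I / 2)) • !![0, 1; 1, 0]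

/-- `τ₂ = -(i/2)σ₂` where `σ₂ = [[0,-i],[i,0]]` is the second Pauli matrix. -/
noncomputable def tau2 : Matrix (Fin 2) (Fin 2) ℂ :=
  (-(Complex.I / 2)) • !![0, -Complex.I; Complex.I, 0]

/-- `τ₃ = -(i/2)σ₃` where `σ₃ = [[1,0],[0,-1]]` is the third Pauli matrix. -/
noncomputable def tau3 : Matrix (Fin 2) (Fin 2) ℂ :=
  (-(Complex.I / 2)) • !![1, 0; 0, -1]

theorem Module.End.sq_eq_one_of_pow_three_eq_neg {K V : Type*} [Field K] [AddCommGroup V]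
    [Module K V] {f : Module.End K V} (hf : f ^ 3 = -f) {k : K} {a b : V}
    (ha : k • f a = b) (hb : k • f b = -a) (hne : a ≠ 0 ∨ b ≠ 0) : k ^ 2 = 1 := by
  have hffa : k ^ 2 • f (f a) = -a := by
    rw [← hb, ← ha, map_smul, smul_smul, sq]
  have hf4 : f (f (f (f a))) = -f (f a) := by
    simpa [pow_succ] using congr($hf (f a))
  have hkill : (k ^ 2 - 1) • f (f a) = 0 := by
    have h := congr(f (f $hffa))
    rw [map_smul, map_smul, hf4, map_neg, map_neg, smul_neg, neg_inj] at h
    rw [sub_smul, one_smul, h, sub_self]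
  by_contra hk
  have hffa0 : f (f a) = 0 := (smul_eq_zero.mp hkill).resolve_left (sub_ne_zero.mpr hk)
  have ha0 : a = 0 := by rw [← neg_eq_zero, ← hffa, hffa0, smul_zero]
  have hb0 : b = 0 := by rw [← ha, ha0, map_zero, smul_zero]
  exact hne.elim (· ha0) (· hb0)

theorem lie_tau3 (X : Matrix (Fin 2) (Fin 2) ℂ) :
    ⁅tau3, X⁆ = !![0, -Complex.I * X 0 1; Complex.I * X 1 0, 0] := by
  rw [Ring.lie_def]
  ext i j
  fin_cases i <;> fin_cases j <;>
    simp [tau3, Matrix.mul_apply, Matrix.vecMul, dotProduct, Fin.sum_univ_two] <;> ring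

section

-- Matrices have the commutator bracket but no global `LieRing` instance; `ad` needs one.
attribute [local instance] LieRing.ofAssociativeRing

theorem ad_tau3_pow_three :
    LieAlgebra.ad ℝ (Matrix (Fin 2) (Fin 2) ℂ) tau3 ^ 3 = -LieAlgebra.ad ℝ _ tau3 := by
  ext X : 1
  simp [pow_succ, lie_tau3, ← mul_assoc, Matrix.neg_of]

end

theorem stmt_10_general (k : ℕ) (Λ₁ Λ₂ : Matrix (Fin 2) (Fin 2) ℂ)
    (e1 : (k : ℝ) • ⁅tau3, Λ₁⁆ = Λ₂)
    (e2 : (k : ℝ) • ⁅tau3, Λ₂⁆ = -Λ₁)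
    (hne : Λ₁ ≠ 0 ∨ Λ₂ ≠ 0) :
    k = 1 := by
  have hk : (k : ℝ) ^ 2 = 1 :=
    Module.End.sq_eq_one_of_pow_three_eq_neg ad_tau3_pow_three e1 e2 hne
  exact_mod_cast (pow_eq_one_iff_of_nonneg k.cast_nonneg two_ne_zero).mp hk

/-- Let `k` be a natural number and let `Λ₁, Λ₂` be real linear
combinations of `τ₁, τ₂, τ₃` satisfying `k·⁅τ₃, Λ₁⁆ = Λ₂` and `k·⁅τ₃, Λ₂⁆ = -Λ₁`.
If `Λ₁ ≠ 0` or `Λ₂ ≠ 0`, then `k = 1`.  (The Higgs field constraint for spherically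
symmetric `SU(2)` connections classified by `λ_k` has a nontrivial solution only
for `k = 1`.) -/
theorem stmt_10 (k : ℕ) (Λ₁ Λ₂ : Matrix (Fin 2) (Fin 2) ℂ)
    (h1 : ∃ a b c : ℝ, Λ₁ = a • tau1 + b • tau2 + c • tau3)
    (h2 : ∃ a b c : ℝ, Λ₂ = a • tau1 + b • tau2 + c • tau3)
    (e1 : (k : ℝ) • ⁅tau3, Λ₁⁆ = Λ₂)
    (e2 : (k : ℝ) • ⁅tau3, Λ₂⁆ = -Λ₁)
    (hne : Λ₁ ≠ 0 ∨ Λ₂ ≠ 0) :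
    k = 1 :=
  stmt_10_general k Λ₁ Λ₂ e1 e2 hne
end

section
/- Let φ be an ℝ-linear map from the space of 2×2 complex matrices to ℝ such that φ(exp(t·τ₃)·τ_j·exp(-t·τ₃)) = φ(τ_j) for all real t and for j = 1, 2, where exp denotes the matrix exponential. Then φ(τ₁) = 0 and φ(τ₂) = 0. (Spherically symmetric U(1)-theory admits no nonvanishing Higgs field: invariance under the adjoint action of the isotropy group forces the Higgs components to vanish.) -/
open NormedSpace in
lemma exp_tau3 (t : ℝ) :
    NormedSpace.exp ((t : ℂ) • tau3)
      = !![Complex.exp (-(t/2) * Complex.I), 0; 0, Complex.exp ((t/2) * Complex.I)] := by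
  have hd : (t : ℂ) • tau3 = Matrix.diagonal ![-(t/2) * Complex.I, (t/2) * Complex.I] := by
    ext i j
    fin_cases i <;> fin_cases j <;>
      simp [tau3, Matrix.diagonal, Matrix.smul_apply] <;> ring
  rw [hd, Matrix.exp_diagonal, Pi.exp_def]
  ext i j
  fin_cases i <;> fin_cases j <;>
    simp [Matrix.diagonal, ← Complex.exp_eq_exp_ℂ]

lemma hI' : Complex.exp ((Real.pi : ℂ)/2 * Complex.I) = Complex.I := by
  rw [Complex.exp_mul_I, Complex.cos_pi_div_two, Complex.sin_pi_div_two]; ring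

lemma hmI' : Complex.exp (-((Real.pi : ℂ)/2 * Complex.I)) = -Complex.I := by
  rw [Complex.exp_neg, hI', Complex.inv_I]

lemma exp_pi_tau3 :
    NormedSpace.exp ((Real.pi : ℂ) • tau3) = !![-Complex.I, 0; 0, Complex.I] := by
  rw [exp_tau3,
    show (-((Real.pi:ℂ)/2) * Complex.I) = -((Real.pi:ℂ)/2 * Complex.I) by ring, hmI', hI']

lemma exp_neg_pi_tau3 :
    NormedSpace.exp ((-Real.pi : ℂ) • tau3) = !![Complex.I, 0; 0, -Complex.I] := by
  rw [show ((-Real.pi : ℂ)) = (((-Real.pi : ℝ)) : ℂ) by push_cast; ring, exp_tau3,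
    show (-(((-Real.pi : ℝ):ℂ)/2) * Complex.I) = ((Real.pi:ℂ)/2 * Complex.I) by push_cast; ring,
    show ((((-Real.pi : ℝ):ℂ)/2) * Complex.I) = -((Real.pi:ℂ)/2 * Complex.I) by push_cast; ring,
    hmI', hI']

lemma I_pow_three' : Complex.I ^ 3 = -Complex.I := by
  rw [pow_succ, Complex.I_sq]; ring

/-- Let `φ` be an `ℝ`-linear map from the space of `2×2` complex matrices
to `ℝ` such that `φ(exp(t·τ₃)·τⱼ·exp(-t·τ₃)) = φ(τⱼ)` for all real `t` and `j = 1, 2`, where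
`exp` is the matrix exponential.  Then `φ(τ₁) = 0` and `φ(τ₂) = 0`.  (Spherically symmetric
`U(1)`-theory admits no nonvanishing Higgs field: invariance under the adjoint action of the
isotropy group forces the Higgs components to vanish.) -/
theorem stmt_12 (φ : Matrix (Fin 2) (Fin 2) ℂ →ₗ[ℝ] ℝ)
    (h1 : ∀ t : ℝ,
      φ (NormedSpace.exp ((t : ℂ) • tau3) * tau1 * NormedSpace.exp ((-t : ℂ) • tau3))
        = φ tau1)
    (h2 : ∀ t : ℝ,
      φ (NormedSpace.exp ((t : ℂ) • tau3) * tau2 * NormedSpace.exp ((-t : ℂ) • tau3))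
        = φ tau2) :
    φ tau1 = 0 ∧ φ tau2 = 0 := by
  have e1 := h1 Real.pi
  have e2 := h2 Real.pi
  rw [exp_pi_tau3, exp_neg_pi_tau3] at e1 e2
  have c1 : (!![-Complex.I, 0; 0, Complex.I] : Matrix (Fin 2) (Fin 2) ℂ) * tau1 *
      !![Complex.I, 0; 0, -Complex.I] = -tau1 := by
    ext i j; fin_cases i <;> fin_cases j <;>
      simp [tau1, Matrix.mul_apply, Fin.sum_univ_two] <;> ring_nf <;> simp only [I_pow_three', Complex.I_pow_four, Complex.I_sq] <;> ring
  have c2 : (!![-Complex.I, 0; 0, Complex.I] : Matrix (Fin 2) (Fin 2) ℂ) * tau2 *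
      !![Complex.I, 0; 0, -Complex.I] = -tau2 := by
    ext i j; fin_cases i <;> fin_cases j <;>
      simp [tau2, Matrix.mul_apply, Fin.sum_univ_two] <;> ring_nf <;> simp only [I_pow_three', Complex.I_pow_four, Complex.I_sq] <;> ring
  rw [c1, map_neg] at e1
  rw [c2, map_neg] at e2
  constructor <;> linarith
end

section
/- Let V be a vector space over a field 𝕜, and let S be a submodule of the dual space V* of linear functionals on V that separates the points of V (for every v ∈ V with v ≠ 0 there exists φ ∈ S with φ(v) ≠ 0). Then for every linear functional ψ ∈ V* and every finite family v₁, …, vₙ ∈ V there exists φ ∈ S with φ(vᵢ) = ψ(vᵢ) for all i = 1, …, n. In particular, S is dense in V* in the weak topology of pointwise convergence. -/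
/-- Let `V` be a vector space over a field `𝕜`, and let `S` be a submodule
of the dual space `V*` of linear functionals on `V` that separates the points of `V` (for
every `v ≠ 0` there is `φ ∈ S` with `φ(v) ≠ 0`).  Then for every linear functional `ψ ∈ V*`
and every finite family `v₁, …, vₙ ∈ V` there exists `φ ∈ S` with `φ(vᵢ) = ψ(vᵢ)` for all
`i`.  In particular, `S` is dense in `V*` in the weak topology of pointwise convergence. -/
theorem stmt_14 {𝕜 V : Type*} [Field 𝕜] [AddCommGroup V] [Module 𝕜 V]
    (S : Submodule 𝕜 (Module.Dual 𝕜 V))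
    (hS : ∀ v : V, v ≠ 0 → ∃ φ ∈ S, φ v ≠ 0)
    (ψ : Module.Dual 𝕜 V) (n : ℕ) (v : Fin n → V) :
    ∃ φ ∈ S, ∀ i, φ (v i) = ψ (v i) := by
  -- evaluation map into 𝕜^n
  set T : Module.Dual 𝕜 V →ₗ[𝕜] (Fin n → 𝕜) :=
    LinearMap.pi (fun i => LinearMap.applyₗ (v i)) with hT
  set W : Submodule 𝕜 (Fin n → 𝕜) := S.map T with hW
  suffices h : T ψ ∈ W by
    obtain ⟨φ, hφS, hφ⟩ := h
    exact ⟨φ, hφS, fun i => congrFun hφ i⟩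
  by_contra hmem
  obtain ⟨f, hf0, hfbot⟩ := W.exists_dual_map_eq_bot_of_notMem hmem inferInstance
  -- coefficients
  have hsingle : ∀ i : Fin n, (Pi.single i (1:𝕜)) = fun j => if i = j then (1:𝕜) else 0 :=
    fun i => funext fun j => by rw [Pi.single_apply]; exact if_congr eq_comm rfl rfl
  set w : V := ∑ i, f (Pi.single i 1) • v i with hw
  have hfw : ∀ φ ∈ S, φ w = 0 := by
    intro φ hφ
    have : f (T φ) = 0 := by
      have : T φ ∈ W := ⟨φ, hφ, rfl⟩
      have := Submodule.mem_map_of_mem (f := f) this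
      rw [hfbot] at this
      simpa using this
    rw [f.pi_apply_eq_sum_univ (T φ)] at this
    simpa [hw, map_sum, T, mul_comm, smul_eq_mul, hsingle] using this
  have hwz : w = 0 := by
    by_contra h
    obtain ⟨φ, hφS, hφ⟩ := hS w h
    exact hφ (hfw φ hφS)
  have : f (T ψ) = 0 := by
    rw [f.pi_apply_eq_sum_univ (T ψ)]
    have := congrArg ψ hwz
    simpa [hw, map_sum, T, mul_comm, smul_eq_mul, hsingle] using this
  exact hf0 this
end
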